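/- Let p be an odd prime, V = 𝔽_p^{2ℓ}, B a non-degenerate symmetric bilinear form on V with associated bicharacter χ_B, τ a square root of |V|⁻¹ = p^{-2ℓ}, and C = TY(V, χ_B, τ) with its canonical spherical structure. Write ε = ((−1)/p)^ℓ (det B / p) sgn(τ), a product of Legendre symbols and the sign of τ. (i) If ε = 1, then FSexp(C) = 2p and ν̄(m) = p^ℓ + (p−1)·sgn(τ). (ii) If ε = −1, then FSexp(C) = 4p and ν̄(m) = 0. -/

import Mathlib

open scoped Classical

/-- Objects of the Tambara–Yamagami category `TY(V, χ_B, τ)`: the invertible objects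
`a ∈ V` together with the non-invertible simple object `m`. -/
abbrev TYObj (V : Type) : Type := V ⊕ Unit

/-- The pivotal dimensions in `TY(V, χ_B, τ)` for `V` of order `p^(2ℓ)`:
`d(a) = 1` for `a ∈ V` and `d(m) = √|V| = p^ℓ`. -/
noncomputable def dTYp (p ℓ : ℕ) : TYObj (Fin (2 * ℓ) → ZMod p) → ℂ :=
  Sum.elim (fun _ => (1 : ℂ)) (fun _ => (p : ℂ) ^ ℓ)

/-- `ε_p = √((-1/p))`: equal to `1` if `-1` is a quadratic residue mod `p`, and to `i`
otherwise. -/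
noncomputable def epsP (p : ℕ) [Fact p.Prime] : ℂ :=
  if legendreSym p (-1) = 1 then 1 else Complex.I

/-!
Collecting the Legendre symbols, Shimizu's formulas say that `ν_n(m) = 0` for odd `n`,
that `ν_{2k}(m) = ε^(k+1) σ` (with `σ = sgn τ`) when `p ∤ k`, and that `ν_{2k}(m) = ε^k p^ℓ`
when `p ∣ k`. As `p^ℓ ≠ 0, ±1`, the equation `ν_n(m) = d(m)` forces `n = 2k` with `p ∣ k` and
`ε^k = 1`; conversely such `n` work for every simple, the invertible ones having order `p`.
So `FSexp(C)` is `2p` when `ε = 1` and `4p` when `ε = -1`. In the first case the sum over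
`1, …, 2p` has `p - 1` terms `σ` and one term `p^ℓ`; in the second, `ε^p = -1` makes
`n ↦ ν_n(m)` antiperiodic with antiperiod `2p`, so its sum over `1, …, 4p` vanishes.
-/

open Finset

section LegendreSigns

variable {p : ℕ} [Fact p.Prime]

theorem legendreSym_neg_natCast_sq {k : ℕ} (hk : ¬ p ∣ k) :
    legendreSym p (-(k : ℤ)) ^ 2 = 1 :=
  legendreSym.sq_one p <| by
    rwa [Ne, Int.cast_neg, neg_eq_zero, Int.cast_natCast, ZMod.natCast_eq_zero_iff]

theorem legendreSym_neg_one_sq : legendreSym p (-1) ^ 2 = 1 := by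
  simpa using legendreSym_neg_natCast_sq (p := p) (k := 1) (Fact.out : p.Prime).not_dvd_one

theorem legendreSym_neg_two_sq (hp2 : p ≠ 2) : legendreSym p (-2) ^ 2 = 1 := by
  have hndvd : ¬ p ∣ 2 := fun h => hp2 ((Nat.prime_dvd_prime_iff_eq Fact.out Nat.prime_two).mp h)
  simpa using legendreSym_neg_natCast_sq hndvd

theorem cast_pow_two_mul_eq_one {a : ℤ} (ha : a ^ 2 = 1) (n : ℕ) : (a : ℂ) ^ (2 * n) = 1 := by
  rw [pow_mul]
  exact_mod_cast congrArg (· ^ n) ha |>.trans (one_pow n)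

theorem epsP_sq : epsP p ^ 2 = legendreSym p (-1) := by
  unfold epsP
  split_ifs with h
  · simp [h]
  · rcases legendreSym.eq_one_or_neg_one p (a := -1) (by simp) with h' | h'
    · exact absurd h' h
    · simp [h']

/-- The sign `ε` of the theorem, for `D = det B` and `σ = sgn τ`. -/
def tySign (p : ℕ) [Fact p.Prime] (ℓ : ℕ) (D σ : ℤ) : ℤ :=
  legendreSym p (-1) ^ ℓ * legendreSym p D * σ

theorem tySign_sq {ℓ : ℕ} {D σ : ℤ} (hD : (D : ZMod p) ≠ 0) (hσ : σ ^ 2 = 1) :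
    tySign p ℓ D σ ^ 2 = 1 := by
  rw [tySign, mul_pow, mul_pow, ← pow_mul, mul_comm ℓ, pow_mul, legendreSym_neg_one_sq,
    legendreSym.sq_one p hD, hσ]
  simp

theorem shimizu_not_dvd_eq (hp2 : p ≠ 2) {σ : ℤ} (hσ : σ ^ 2 = 1) (D : ℤ) (ℓ : ℕ) {k : ℕ}
    (hk : ¬ p ∣ k) :
    (σ : ℂ) ^ k * epsP p ^ (2 * ℓ * (k + 1)) * (legendreSym p (-(k : ℤ)) : ℂ) ^ (2 * ℓ) *
        (legendreSym p (-2) : ℂ) ^ (2 * ℓ * (k + 1)) * (legendreSym p D : ℂ) ^ (k + 1) =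
      (tySign p ℓ D σ : ℂ) ^ (k + 1) * σ := by
  have hσC : (σ : ℂ) ^ 2 = 1 := by exact_mod_cast hσ
  rw [mul_assoc 2, pow_mul (epsP p), epsP_sq,
    cast_pow_two_mul_eq_one (legendreSym_neg_natCast_sq hk),
    cast_pow_two_mul_eq_one (legendreSym_neg_two_sq hp2), tySign]
  push_cast
  linear_combination
    (-(legendreSym p (-1) : ℂ) ^ (ℓ * (k + 1)) * (legendreSym p D : ℂ) ^ (k + 1) * (σ : ℂ) ^ k) *
      hσC

theorem shimizu_dvd_eq (hp2 : p ≠ 2) (σ D : ℤ) (ℓ k : ℕ) (x : ℂ) :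
    (σ : ℂ) ^ k * epsP p ^ (2 * ℓ * k) * (legendreSym p (-2) : ℂ) ^ (2 * ℓ * k) *
        (legendreSym p D : ℂ) ^ k * x =
      (tySign p ℓ D σ : ℂ) ^ k * x := by
  rw [mul_assoc 2, pow_mul (epsP p), epsP_sq,
    cast_pow_two_mul_eq_one (legendreSym_neg_two_sq hp2), tySign]
  push_cast
  ring

end LegendreSigns

theorem sum_Icc_two_mul_of_odd_eq_zero {M : Type*} [AddCommMonoid M] {g : ℕ → M}
    (hg : ∀ i, Odd i → g i = 0) (n : ℕ) :
    ∑ i ∈ Icc 1 (2 * n), g i = ∑ k ∈ Icc 1 n, g (2 * k) := by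
  induction n with
  | zero => simp
  | succ n ih =>
    rw [Nat.mul_succ, sum_Icc_succ_top (by omega), sum_Icc_succ_top (by omega), ih,
      hg _ (odd_two_mul_add_one n), add_zero, sum_Icc_succ_top (by omega), Nat.mul_succ]

theorem sum_Icc_two_mul_eq_zero_of_antiperiodic {M : Type*} [AddCommGroup M] {g : ℕ → M}
    {q : ℕ} (hg : ∀ i, 0 < i → g (i + q) = -g i) :
    ∑ i ∈ Icc 1 (2 * q), g i = 0 := by
  have hIcc : ∀ n, ∑ i ∈ Icc 1 n, g i = ∑ i ∈ range n, g (i + 1) := fun n => by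
    rw [range_eq_Ico, sum_Ico_add']
    rfl
  rw [hIcc, two_mul, sum_range_add, ← sum_add_distrib]
  refine sum_eq_zero fun i _ => ?_
  rw [show q + i + 1 = i + 1 + q by ring, hg _ i.succ_pos, add_neg_cancel]

/-- The shape of Shimizu's formulas for the indicators `g n = ν_n(m)` of the non-invertible
object of a Tambara–Yamagami category, once the Legendre symbols are collected into a sign `ε`. -/
structure IsTYIndicatorSeq (p : ℕ) (ε σ P : ℂ) (g : ℕ → ℂ) : Prop where
  odd : ∀ n, Odd n → g n = 0
  two_mul_of_not_dvd : ∀ k, 0 < k → ¬ p ∣ k → g (2 * k) = ε ^ (k + 1) * σ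
  two_mul_of_dvd : ∀ k, 0 < k → p ∣ k → g (2 * k) = ε ^ k * P

namespace IsTYIndicatorSeq

variable {p : ℕ} {ε σ P : ℂ} {g : ℕ → ℂ}

theorem exists_eq_two_mul_of_apply_eq (h : IsTYIndicatorSeq p ε σ P g) (hε : ε ^ 2 = 1)
    (hσ : σ ^ 2 = 1) (hP₀ : P ≠ 0) (hP₁ : P ^ 2 ≠ 1) {n : ℕ} (hn : 0 < n) (hgn : g n = P) :
    ∃ k, 0 < k ∧ n = 2 * k ∧ p ∣ k ∧ ε ^ k = 1 := by
  obtain ⟨k, rfl⟩ : Even n := by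
    by_contra hodd
    exact hP₀ (hgn ▸ h.odd n (Nat.not_even_iff_odd.mp hodd))
  have hk : 0 < k := by omega
  by_cases hpk : p ∣ k
  · refine ⟨k, hk, (two_mul k).symm, hpk, ?_⟩
    rw [← two_mul, h.two_mul_of_dvd k hk hpk] at hgn
    exact mul_right_cancel₀ hP₀ (hgn.trans (one_mul P).symm)
  · rw [← two_mul, h.two_mul_of_not_dvd k hk hpk] at hgn
    refine absurd ?_ hP₁
    rw [← hgn, mul_pow, ← pow_mul, mul_comm (k + 1), pow_mul, hε, one_pow, hσ, one_mul]

theorem sum_Icc_of_sign_eq_one (h : IsTYIndicatorSeq p 1 σ P g) (hp : 0 < p) :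
    ∑ i ∈ Icc 1 (2 * p), g i = P + (p - 1) * σ := by
  have hmem : p ∈ Icc 1 p := mem_Icc.mpr ⟨hp, le_rfl⟩
  have hσ : ∀ k ∈ (Icc 1 p).erase p, g (2 * k) = σ := fun k hk => by
    obtain ⟨hkp, hk⟩ := mem_erase.mp hk
    obtain ⟨hk₁, hk₂⟩ := mem_Icc.mp hk
    have hndvd : ¬ p ∣ k := fun hdvd => hkp (le_antisymm hk₂ (Nat.le_of_dvd hk₁ hdvd))
    rw [h.two_mul_of_not_dvd k hk₁ hndvd, one_pow, one_mul]
  rw [sum_Icc_two_mul_of_odd_eq_zero h.odd, ← add_sum_erase _ _ hmem,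
    h.two_mul_of_dvd p hp dvd_rfl, sum_congr rfl hσ, sum_const, card_erase_of_mem hmem,
    Nat.card_Icc, one_pow, one_mul, nsmul_eq_mul, Nat.add_sub_cancel, Nat.cast_pred hp]

theorem apply_add_two_mul (h : IsTYIndicatorSeq p ε σ P g) (hε : ε ^ p = -1) {i : ℕ}
    (hi : 0 < i) : g (i + 2 * p) = -g i := by
  rcases Nat.even_or_odd i with ⟨k, rfl⟩ | hodd
  · have hk : 0 < k := by omega
    rw [← two_mul, ← mul_add]
    by_cases hpk : p ∣ k
    · rw [h.two_mul_of_dvd k hk hpk,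
        h.two_mul_of_dvd (k + p) (by omega) ((Nat.dvd_add_right hpk).mpr dvd_rfl), pow_add, hε]
      ring
    · rw [h.two_mul_of_not_dvd k hk hpk,
        h.two_mul_of_not_dvd (k + p) (by omega) (by rwa [Nat.dvd_add_left dvd_rfl]),
        add_right_comm, pow_add, hε]
      ring
  · rw [h.odd i hodd, h.odd _ (hodd.add_even (even_two_mul p)), neg_zero]

theorem sum_Icc_of_sign_pow_eq_neg_one (h : IsTYIndicatorSeq p ε σ P g) (hε : ε ^ p = -1) :
    ∑ i ∈ Icc 1 (2 * (2 * p)), g i = 0 :=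
  sum_Icc_two_mul_eq_zero_of_antiperiodic fun _ hi => h.apply_add_two_mul hε hi

end IsTYIndicatorSeq

theorem natCast_pow_sq_ne_one {p ℓ : ℕ} (hp : 1 < p) (hℓ : 0 < ℓ) : ((p : ℂ) ^ ℓ) ^ 2 ≠ 1 := by
  rw [← pow_mul]
  exact_mod_cast (Nat.one_lt_pow (by omega) hp).ne'

theorem setOf_indicator_eq_dim_eq_image {p ℓ : ℕ} [Fact p.Prime] (hℓ : 0 < ℓ)
    {ν : TYObj (Fin (2 * ℓ) → ZMod p) → ℕ → ℂ} {ε σ : ℂ}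
    (hνa : ∀ a n, ν (Sum.inl a) n = if n • a = 0 then (1 : ℂ) else 0)
    (hm : IsTYIndicatorSeq p ε σ ((p : ℂ) ^ ℓ) (ν (Sum.inr ()))) (hε : ε ^ 2 = 1)
    (hσ : σ ^ 2 = 1) :
    {n | 0 < n ∧ ∀ s, ν s n = dTYp p ℓ s} =
      (2 * ·) '' {k | 0 < k ∧ p ∣ k ∧ ε ^ k = 1} := by
  have hp : p.Prime := Fact.out
  ext n
  simp only [Set.mem_ofPred_eq, Set.mem_image]
  constructor
  · rintro ⟨hn, hν⟩
    obtain ⟨k, hk, rfl, hpk, hεk⟩ := hm.exists_eq_two_mul_of_apply_eq hε hσ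
      (pow_ne_zero _ (Nat.cast_ne_zero.mpr hp.ne_zero)) (natCast_pow_sq_ne_one hp.one_lt hℓ) hn
      (hν (Sum.inr ()))
    exact ⟨k, ⟨hk, hpk, hεk⟩, rfl⟩
  · rintro ⟨k, ⟨hk, hpk, hεk⟩, rfl⟩
    refine ⟨by omega, ?_⟩
    rintro (a | ⟨⟩)
    · obtain ⟨c, rfl⟩ := hpk
      rw [hνa, mul_left_comm, mul_nsmul, ZModModule.char_nsmul_eq_zero p, nsmul_zero,
        if_pos rfl]
      rfl
    · rw [hm.two_mul_of_dvd k hk hpk, hεk, one_mul]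
      rfl

theorem isLeast_pos_dvd_one_pow {p : ℕ} (hp : 0 < p) :
    IsLeast {k | 0 < k ∧ p ∣ k ∧ (1 : ℂ) ^ k = 1} p :=
  ⟨⟨hp, dvd_rfl, one_pow p⟩, fun _ ⟨hk, hpk, _⟩ => Nat.le_of_dvd hk hpk⟩

theorem isLeast_pos_dvd_neg_one_pow {p : ℕ} (hp : Odd p) :
    IsLeast {k | 0 < k ∧ p ∣ k ∧ (-1 : ℂ) ^ k = 1} (2 * p) := by
  have heven : ∀ k, (-1 : ℂ) ^ k = 1 ↔ Even k := fun _ => neg_one_pow_eq_one_iff_even (by norm_num)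
  refine ⟨⟨by have := hp.pos; omega, dvd_mul_left p 2, (heven _).mpr (even_two_mul p)⟩, ?_⟩
  rintro k ⟨hk, hpk, hk1⟩
  have h2p : 2 * p ∣ k :=
    (Nat.coprime_two_left.mpr hp).mul_dvd_of_dvd_of_dvd ((heven k).mp hk1).two_dvd hpk
  exact Nat.le_of_dvd hk h2p

theorem TY_odd_char_FSexp_and_totalInd_general
    (p : ℕ) [Fact p.Prime] (hp2 : p ≠ 2) (ℓ : ℕ) (hℓ : 0 < ℓ)
    (M : Matrix (Fin (2 * ℓ)) (Fin (2 * ℓ)) (ZMod p))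
    (hMdet : M.det ≠ 0)
    (τ : ℝ)
    (ν : TYObj (Fin (2 * ℓ) → ZMod p) → ℕ → ℂ)
    -- the indicators of the invertible objects: `ν_n(a) = δ_{na,0}`
    (hνa : ∀ a n, ν (Sum.inl a) n = if n • a = 0 then (1 : ℂ) else 0)
    -- Shimizu's formulas for the indicators of `m`:
    (hνodd : ∀ n, Odd n → ν (Sum.inr ()) n = 0)
    (hν_ndvd : ∀ k, 0 < k → ¬ p ∣ k →
      ν (Sum.inr ()) (2 * k) =
        (if 0 < τ then (1 : ℂ) else -1) ^ k * epsP p ^ (2 * ℓ * (k + 1)) *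
          ((legendreSym p (-(k : ℤ)) : ℂ)) ^ (2 * ℓ) *
          ((legendreSym p (-2) : ℂ)) ^ (2 * ℓ * (k + 1)) *
          ((legendreSym p (M.det.val : ℤ) : ℂ)) ^ (k + 1))
    (hν_dvd : ∀ k, 0 < k → p ∣ k →
      ν (Sum.inr ()) (2 * k) =
        (if 0 < τ then (1 : ℂ) else -1) ^ k * epsP p ^ (2 * ℓ * k) *
          ((legendreSym p (-2) : ℂ)) ^ (2 * ℓ * k) *
          ((legendreSym p (M.det.val : ℤ) : ℂ)) ^ k * (p : ℂ) ^ ℓ)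
    -- `N = FSexp(C)`:
    (N : ℕ) (hN : 0 < N)
    (hNspec : ∀ s, ν s N = dTYp p ℓ s)
    (hNmin : ∀ n, 0 < n → (∀ s, ν s n = dTYp p ℓ s) → N ≤ n) :
    ((legendreSym p (-1)) ^ ℓ * legendreSym p (M.det.val : ℤ) *
        (if 0 < τ then 1 else -1) = 1 →
      N = 2 * p ∧ (∑ i ∈ Finset.Icc 1 N, ν (Sum.inr ()) i) =
        (p : ℂ) ^ ℓ + ((p : ℂ) - 1) * (if 0 < τ then (1 : ℂ) else -1)) ∧
    ((legendreSym p (-1)) ^ ℓ * legendreSym p (M.det.val : ℤ) *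
        (if 0 < τ then 1 else -1) = -1 →
      N = 4 * p ∧ (∑ i ∈ Finset.Icc 1 N, ν (Sum.inr ()) i) = 0) := by
  have hp : p.Prime := Fact.out
  set σ : ℤ := if 0 < τ then 1 else -1 with hσ_def
  have hσ : σ ^ 2 = 1 := by rw [hσ_def]; split_ifs <;> norm_num
  have hσC : (if 0 < τ then (1 : ℂ) else -1) = σ := by rw [hσ_def]; split_ifs <;> simp
  simp only [hσC] at hν_ndvd hν_dvd ⊢
  set ε := tySign p ℓ M.det.val σ
  have hm : IsTYIndicatorSeq p ε σ ((p : ℂ) ^ ℓ) (ν (Sum.inr ())) :=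
    ⟨hνodd, fun k hk hpk => (hν_ndvd k hk hpk).trans (shimizu_not_dvd_eq hp2 hσ _ ℓ hpk),
      fun k hk hpk => (hν_dvd k hk hpk).trans (shimizu_dvd_eq hp2 σ _ ℓ k _)⟩
  have hε : (ε : ℂ) ^ 2 = 1 := by exact_mod_cast tySign_sq (by simpa using hMdet) hσ
  have hFS : IsLeast ((2 * ·) '' {k | 0 < k ∧ p ∣ k ∧ (ε : ℂ) ^ k = 1}) N := by
    rw [← setOf_indicator_eq_dim_eq_image hℓ hνa hm hε (by exact_mod_cast hσ)]
    exact ⟨⟨hN, hNspec⟩, fun n hn => hNmin n hn.1 hn.2⟩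
  have hdouble : Monotone (2 * · : ℕ → ℕ) := fun _ _ h => Nat.mul_le_mul_left 2 h
  refine ⟨fun hε₁ => ?_, fun hε₁ => ?_⟩
  · have hεC : (ε : ℂ) = 1 := by exact_mod_cast (hε₁ : ε = 1)
    rw [hεC] at hm hFS
    have hN2p : N = 2 * p := hFS.unique (hdouble.map_isLeast (isLeast_pos_dvd_one_pow hp.pos))
    exact ⟨hN2p, hN2p ▸ hm.sum_Icc_of_sign_eq_one hp.pos⟩
  · have hεC : (ε : ℂ) = -1 := by exact_mod_cast (hε₁ : ε = -1)
    rw [hεC] at hm hFS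
    have hpodd : Odd p := hp.odd_of_ne_two hp2
    have hN4p : N = 2 * (2 * p) :=
      hFS.unique (hdouble.map_isLeast (isLeast_pos_dvd_neg_one_pow hpodd))
    exact ⟨by omega, hN4p ▸ hm.sum_Icc_of_sign_pow_eq_neg_one hpodd.neg_one_pow⟩

/-- **Proposition 5.4.** Let `p` be an odd prime, `V = 𝔽_p^(2ℓ)`, `B` a
non-degenerate symmetric bilinear form on `V` (recorded by its Gram matrix `M`), `χ_B` the
associated bicharacter, `τ` a square root of `|V|⁻¹ = p^(-2ℓ)`, and `C = TY(V, χ_B, τ)`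
with its canonical spherical structure, whose Frobenius–Schur indicators are given by
`ν_n(a) = δ_{na,0}` for `a ∈ V` and by Shimizu's formulas for `m` (recorded as hypotheses
below).  Write `ε = ((-1)/p)^ℓ (det B / p) sgn(τ)`.  Then:
(i) if `ε = 1`, then `FSexp(C) = 2p` and `ν̄(m) = p^ℓ + (p - 1)·sgn(τ)`;
(ii) if `ε = -1`, then `FSexp(C) = 4p` and `ν̄(m) = 0`. -/
theorem TY_odd_char_FSexp_and_totalInd
    (p : ℕ) [Fact p.Prime] (hp2 : p ≠ 2) (ℓ : ℕ) (hℓ : 0 < ℓ)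
    (M : Matrix (Fin (2 * ℓ)) (Fin (2 * ℓ)) (ZMod p))
    (hMsymm : M.IsSymm) (hMdet : M.det ≠ 0)
    (τ : ℝ) (hτ : τ ^ 2 = ((p : ℝ) ^ (2 * ℓ))⁻¹)
    (ν : TYObj (Fin (2 * ℓ) → ZMod p) → ℕ → ℂ)
    -- the indicators of the invertible objects: `ν_n(a) = δ_{na,0}`
    (hνa : ∀ a n, ν (Sum.inl a) n = if n • a = 0 then (1 : ℂ) else 0)
    -- Shimizu's formulas for the indicators of `m`:
    (hνodd : ∀ n, Odd n → ν (Sum.inr ()) n = 0)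
    (hν_ndvd : ∀ k, 0 < k → ¬ p ∣ k →
      ν (Sum.inr ()) (2 * k) =
        (if 0 < τ then (1 : ℂ) else -1) ^ k * epsP p ^ (2 * ℓ * (k + 1)) *
          ((legendreSym p (-(k : ℤ)) : ℂ)) ^ (2 * ℓ) *
          ((legendreSym p (-2) : ℂ)) ^ (2 * ℓ * (k + 1)) *
          ((legendreSym p (M.det.val : ℤ) : ℂ)) ^ (k + 1))
    (hν_dvd : ∀ k, 0 < k → p ∣ k →
      ν (Sum.inr ()) (2 * k) =
        (if 0 < τ then (1 : ℂ) else -1) ^ k * epsP p ^ (2 * ℓ * k) *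
          ((legendreSym p (-2) : ℂ)) ^ (2 * ℓ * k) *
          ((legendreSym p (M.det.val : ℤ) : ℂ)) ^ k * (p : ℂ) ^ ℓ)
    -- `N = FSexp(C)`:
    (N : ℕ) (hN : 0 < N)
    (hNspec : ∀ s, ν s N = dTYp p ℓ s)
    (hNmin : ∀ n, 0 < n → (∀ s, ν s n = dTYp p ℓ s) → N ≤ n) :
    ((legendreSym p (-1)) ^ ℓ * legendreSym p (M.det.val : ℤ) *
        (if 0 < τ then 1 else -1) = 1 →
      N = 2 * p ∧ (∑ i ∈ Finset.Icc 1 N, ν (Sum.inr ()) i) =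
        (p : ℂ) ^ ℓ + ((p : ℂ) - 1) * (if 0 < τ then (1 : ℂ) else -1)) ∧
    ((legendreSym p (-1)) ^ ℓ * legendreSym p (M.det.val : ℤ) *
        (if 0 < τ then 1 else -1) = -1 →
      N = 4 * p ∧ (∑ i ∈ Finset.Icc 1 N, ν (Sum.inr ()) i) = 0) :=
  TY_odd_char_FSexp_and_totalInd_general p hp2 ℓ hℓ M hMdet τ ν hνa hνodd hν_ndvd hν_dvd N hN hNspec
    hNmin
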